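/- Suppose X is doubling and q ∈ [1,∞). If f ∈ L^q_c(X⁺), then the function 𝒜^q f : X → [0,∞) is continuous; moreover 𝒜^q f(x) ≤ C ‖f‖_{L^q(X⁺)} for all x ∈ X, where C depends only on X and a cylinder outside of which f vanishes a.e. -/

import Mathlib

open MeasureTheory Metric Set Filter ENNReal
open scoped NNReal Topology

noncomputable section

namespace WTS

variable {X : Type*} [MetricSpace X] [MeasurableSpace X]

/-- The measure `dt/t` on `(0,∞) ⊆ ℝ`. -/
def tMeasure : Measure ℝ :=
  (volume.restrict (Ioi (0:ℝ))).withDensity fun t => ENNReal.ofReal t⁻¹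

/-- The measure `dμ(y) dt/t` on the generalised half-space `X⁺ = X × (0,∞)`. -/
def muPlus (μ : Measure X) : Measure (X × ℝ) := μ.prod tMeasure

/-- The cone with vertex `x`. -/
def cone (x : X) : Set (X × ℝ) := {p | dist x p.1 < p.2}

/-- The tent over the ball `B(z,r)`. -/
def tent (z : X) (r : ℝ) : Set (X × ℝ) := {p | 0 < p.2 ∧ ball p.1 p.2 ⊆ ball z r}

/-- Ball volume `V(x,t)`. -/
def vol (μ : Measure X) (x : X) (t : ℝ) : ℝ≥0∞ := μ (ball x t)

/-- The multiplication operator `V^s`. -/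
def Vpow (μ : Measure X) (s : ℝ) (f : X × ℝ → ℂ) : X × ℝ → ℂ := fun p =>
  (((vol μ p.1 p.2).toReal ^ s : ℝ) : ℂ) * f p

/-- `𝒜^q f (x)`, `q` finite. -/
def Aq (μ : Measure X) (q : ℝ) (f : X × ℝ → ℂ) (x : X) : ℝ≥0∞ :=
  (∫⁻ p in cone x, (‖f p‖₊ : ℝ≥0∞) ^ q / vol μ p.1 p.2 ∂muPlus μ) ^ (1/q)

/-- `𝒜^∞ f (x)`. -/
def Ainf (μ : Measure X) (f : X × ℝ → ℂ) (x : X) : ℝ≥0∞ :=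
  essSup (fun p => (‖f p‖₊ : ℝ≥0∞)) ((muPlus μ).restrict (cone x))

/-- `𝒜^q f (x)` for `q ∈ (0,∞]`. -/
def AqE (μ : Measure X) (q : ℝ≥0∞) (f : X × ℝ → ℂ) (x : X) : ℝ≥0∞ :=
  if q = ∞ then Ainf μ f x else Aq μ q.toReal f x

/-- `𝒞^q_α f (x)`, `q` finite. -/
def Cq (μ : Measure X) (q α : ℝ) (f : X × ℝ → ℂ) (x : X) : ℝ≥0∞ :=
  ⨆ (z : X) (r : ℝ) (_ : 0 < r ∧ x ∈ ball z r),
    μ (ball z r) ^ (-α) *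
      ((μ (ball z r))⁻¹ * ∫⁻ p in tent z r, (‖f p‖₊ : ℝ≥0∞) ^ q ∂muPlus μ) ^ (1/q)

/-- `𝒞^∞_α f (x)`. -/
def Cinf (μ : Measure X) (α : ℝ) (f : X × ℝ → ℂ) (x : X) : ℝ≥0∞ :=
  ⨆ (z : X) (r : ℝ) (_ : 0 < r ∧ x ∈ ball z r),
    μ (ball z r) ^ (-(1+α)) *
      essSup (fun p => (‖f p‖₊ : ℝ≥0∞)) ((muPlus μ).restrict (tent z r))

/-- `𝒞^q_α f (x)` for `q ∈ (0,∞]`. -/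
def CqE (μ : Measure X) (q : ℝ≥0∞) (α : ℝ) (f : X × ℝ → ℂ) (x : X) : ℝ≥0∞ :=
  if q = ∞ then Cinf μ α f x else Cq μ q.toReal α f x

/-- The (unweighted) tent space quasinorm `‖f‖_{T^{p,q}}`, `p, q` finite. -/
def tentNorm (μ : Measure X) (p q : ℝ) (f : X × ℝ → ℂ) : ℝ≥0∞ :=
  (∫⁻ x, Aq μ q f x ^ p ∂μ) ^ (1/p)

/-- The weighted tent space quasinorm `‖f‖_{T^{p,q}_s}`, `p, q` finite. -/
def tentNormS (μ : Measure X) (p q s : ℝ) (f : X × ℝ → ℂ) : ℝ≥0∞ :=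
  tentNorm μ p q (Vpow μ (-s) f)

/-- The quasinorm `‖f‖_{T^{p,∞}}`, `p` finite. -/
def tentNormQInf (μ : Measure X) (p : ℝ) (f : X × ℝ → ℂ) : ℝ≥0∞ :=
  (∫⁻ x, Ainf μ f x ^ p ∂μ) ^ (1/p)

/-- The norm `‖f‖_{T^{∞,q}_{s;α}}`, `q` finite. -/
def tentNormPInf (μ : Measure X) (q s α : ℝ) (f : X × ℝ → ℂ) : ℝ≥0∞ :=
  essSup (Cq μ q α (Vpow μ (-s) f)) μ

/-- The norm `‖f‖_{T^{∞,∞}_{s;α}} = sup_B μ(B)^{-α} ‖V^{-s} f‖_{L^∞(T(B))}`. -/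
def tentNormInfInf (μ : Measure X) (s α : ℝ) (f : X × ℝ → ℂ) : ℝ≥0∞ :=
  ⨆ (z : X) (r : ℝ) (_ : 0 < r),
    μ (ball z r) ^ (-α) *
      essSup (fun p => (‖Vpow μ (-s) f p‖₊ : ℝ≥0∞)) ((muPlus μ).restrict (tent z r))

/-- `‖V^{-s} f‖_{L^∞(X⁺)}`. -/
def linfNormPlus (μ : Measure X) (s : ℝ) (f : X × ℝ → ℂ) : ℝ≥0∞ :=
  essSup (fun p => (‖Vpow μ (-s) f p‖₊ : ℝ≥0∞)) (muPlus μ)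

/-- The quasinorm of `T^{p,q}_s` for `p, q ∈ (0,∞]` (with `α = 0` when `p = ∞`,
and with `‖V^{-s}f‖_{L^∞(X⁺)}` when `p = q = ∞`). -/
def TNE (μ : Measure X) (p q : ℝ≥0∞) (s : ℝ) (f : X × ℝ → ℂ) : ℝ≥0∞ :=
  if p = ∞ then
    (if q = ∞ then linfNormPlus μ s f else tentNormPInf μ q.toReal s 0 f)
  else (∫⁻ x, AqE μ q (Vpow μ (-s) f) x ^ p.toReal ∂μ) ^ (1/p.toReal)

/-- The norm of `L^q_s(X⁺)`, i.e. `L^q` with respect to `V^{-qs-1} dμ dt/t`. -/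
def LqsNorm (μ : Measure X) (q s : ℝ) (f : X × ℝ → ℂ) : ℝ≥0∞ :=
  (∫⁻ p, (‖f p‖₊ : ℝ≥0∞) ^ q * vol μ p.1 p.2 ^ (-(q*s)) / vol μ p.1 p.2 ∂muPlus μ) ^ (1/q)

/-- `L^q` norm with respect to a measure. -/
def LqNorm {α : Type*} [MeasurableSpace α] (ν : Measure α) (q : ℝ) (f : α → ℂ) : ℝ≥0∞ :=
  (∫⁻ x, (‖f x‖₊ : ℝ≥0∞) ^ q ∂ν) ^ (1/q)

/-- Nondegeneracy of a metric measure space. -/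
def Nondeg (μ : Measure X) : Prop :=
  ∀ (x : X) (r : ℝ), 0 < r → 0 < μ (ball x r) ∧ μ (ball x r) < ∞

/-- The doubling condition. -/
def Doubling (μ : Measure X) : Prop :=
  ∃ C : ℝ≥0∞, 1 ≤ C ∧ C < ∞ ∧ ∀ (x : X) (r : ℝ), 0 < r → μ (ball x (2*r)) ≤ C * μ (ball x r)

/-- AD-regularity of dimension `n` (for all radii, as appropriate for unbounded spaces). -/
def ADRegular (μ : Measure X) (n : ℝ) : Prop :=
  ∃ C : ℝ≥0∞, 1 ≤ C ∧ C < ∞ ∧ ∀ (x : X) (r : ℝ), 0 < r →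
    ENNReal.ofReal (r ^ n) ≤ C * μ (ball x r) ∧ μ (ball x r) ≤ C * ENNReal.ofReal (r ^ n)

/-- Metric unboundedness. -/
def MetricUnbounded (X : Type*) [MetricSpace X] : Prop :=
  ∀ R : ℝ, ∃ x y : X, R < dist x y

/-- A function on `X⁺` is cylindrically supported if it vanishes a.e. outside a cylinder. -/
def CylSupported (μ : Measure X) (f : X × ℝ → ℂ) : Prop :=
  ∃ (z : X) (r a b : ℝ), 0 < r ∧ 0 < a ∧ a < b ∧
    ∀ᵐ p ∂muPlus μ, p ∉ ball z r ×ˢ Ioo a b → f p = 0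

/-- The K-functional associated with two quasinorms on functions. -/
def Kfun {α : Type*} [MeasurableSpace α] (ν : Measure α)
    (N₀ N₁ : (α → ℂ) → ℝ≥0∞) (t : ℝ≥0∞) (f : α → ℂ) : ℝ≥0∞ :=
  ⨅ (g : α → ℂ) (h : α → ℂ) (_ : f =ᵐ[ν] g + h), N₀ g + t * N₁ h

/-- The real interpolation quasinorm `‖f‖_{(A₀,A₁)_{θ,p}}`, continuous form. -/
def interpNorm {α : Type*} [MeasurableSpace α] (ν : Measure α)
    (N₀ N₁ : (α → ℂ) → ℝ≥0∞) (θ p : ℝ) (f : α → ℂ) : ℝ≥0∞ :=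
  (∫⁻ t in Ioi (0:ℝ),
      (ENNReal.ofReal (t ^ (-θ)) * Kfun ν N₀ N₁ (ENNReal.ofReal t) f) ^ p *
        ENNReal.ofReal t⁻¹) ^ (1/p)

/-- The real interpolation quasinorm, discrete form. -/
def interpNormD {α : Type*} [MeasurableSpace α] (ν : Measure α)
    (N₀ N₁ : (α → ℂ) → ℝ≥0∞) (θ p : ℝ) (f : α → ℂ) : ℝ≥0∞ :=
  (∑' k : ℤ, (ENNReal.ofReal ((2:ℝ) ^ (-(k:ℝ) * θ)) *
      Kfun ν N₀ N₁ (ENNReal.ofReal ((2:ℝ) ^ (k:ℝ))) f) ^ p) ^ (1/p)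

/-- The Whitney region `Ω_{c₀,c₁}(x,t)`. -/
def whitney (c₀ c₁ : ℝ) (x : X) (t : ℝ) : Set (X × ℝ) :=
  ball x (c₀ * t) ×ˢ Ioo (t / c₁) (c₁ * t)

/-- The `L^q`-Whitney average `𝒲^q_{c₀,c₁} f (x,t)` (with respect to `dμ(ξ) dτ`). -/
def Wavg (μ : Measure X) (c₀ c₁ q : ℝ) (f : X × ℝ → ℂ) (x : X) (t : ℝ) : ℝ≥0∞ :=
  (((μ.prod volume) (whitney c₀ c₁ x t))⁻¹ *
      ∫⁻ p in whitney c₀ c₁ x t, (‖f p‖₊ : ℝ≥0∞) ^ q ∂μ.prod volume) ^ (1/q)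

/-- The Z-space quasinorm `‖f‖_{Z^{p,q}_s(X;c₀,c₁)}`. -/
def Znorm (μ : Measure X) (p q s c₀ c₁ : ℝ) (f : X × ℝ → ℂ) : ℝ≥0∞ :=
  (∫⁻ w, Wavg μ c₀ c₁ q (Vpow μ (-s) f) w.1 w.2 ^ p ∂muPlus μ) ^ (1/p)

end WTS

/-! Doubling bounds `V(y,t)` below by `δ = μ(B(z,a))/C^n` on `B(z,r) × [a,∞)`, so
`|f|^q / V ≤ δ⁻¹ |f|^q` there, which gives the uniform bound. For continuity, `(𝒜^q f(x))^q`
is the mass of the cone `Γ(x)` under the finite measure `|f|^q / V dμ dt/t`. As `x → x₀` the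
indicators of `Γ(x)` converge to that of `Γ(x₀)` off the boundary `{t = d(x₀,y)}`, which is
null because `dt/t` has no atoms, and dominated convergence applies. -/

namespace WTS

variable {X : Type*} [MetricSpace X]

instance : SFinite tMeasure := by
  unfold tMeasure; infer_instance

instance : NullSingletonClass tMeasure := by
  unfold tMeasure; infer_instance

theorem measure_prod_graph_eq_zero {α : Type*} [MeasurableSpace α] (μ : Measure α)
    (ν : Measure ℝ) [SFinite ν] [NullSingletonClass ν] {g : α → ℝ} (hg : Measurable g) :
    μ.prod ν {p | p.2 = g p.1} = 0 :=
  (Measure.measure_prod_null (measurableSet_graph hg)).2 <|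
    ae_of_all _ fun x => by simp [preimage]

theorem eventually_mem_cone_iff {x₀ : X} {p : X × ℝ} (hp : p.2 ≠ dist x₀ p.1) :
    ∀ᶠ x in 𝓝 x₀, p ∈ cone x ↔ p ∈ cone x₀ := by
  have hdist : Tendsto (fun x => dist x p.1) (𝓝 x₀) (𝓝 (dist x₀ p.1)) :=
    (continuous_id.dist continuous_const).tendsto x₀
  rcases hp.lt_or_gt with hlt | hgt
  · filter_upwards [hdist.eventually_const_lt hlt] with x hx
    change dist x p.1 < p.2 ↔ dist x₀ p.1 < p.2
    constructor <;> intro h <;> linarith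
  · filter_upwards [hdist.eventually_lt_const hgt] with x hx
    exact iff_of_true hx hgt

variable [MeasurableSpace X]

theorem measurableSet_cone [OpensMeasurableSpace X] (x : X) : MeasurableSet (cone x) :=
  measurableSet_lt ((continuous_const.dist continuous_id).measurable.comp measurable_fst)
    measurable_snd

theorem continuous_measure_cone [OpensMeasurableSpace X] (ν : Measure (X × ℝ))
    (hν : ν univ ≠ ∞) (hnull : ∀ x, ν {p | p.2 = dist x p.1} = 0) :
    Continuous fun x => ν (cone x) := by
  refine continuous_iff_continuousAt.2 fun x₀ => ?_
  refine tendsto_measure_of_ae_tendsto_indicator (𝓝 x₀) (measurableSet_cone x₀)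
    measurableSet_cone MeasurableSet.univ hν (Eventually.of_forall fun x => subset_univ _) ?_
  exact (measure_eq_zero_iff_ae_notMem.1 (hnull x₀)).mono fun p hp => eventually_mem_cone_iff hp

theorem muPlus_graph_dist_eq_zero [OpensMeasurableSpace X] (μ : Measure X) (x : X) :
    muPlus μ {p | p.2 = dist x p.1} = 0 :=
  measure_prod_graph_eq_zero μ tMeasure (continuous_const.dist continuous_id).measurable

theorem measure_ball_two_pow_mul_le {μ : Measure X} {C : ℝ≥0∞}
    (hC : ∀ (x : X) (r : ℝ), 0 < r → μ (ball x (2 * r)) ≤ C * μ (ball x r))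
    (y : X) {s : ℝ} (hs : 0 < s) (n : ℕ) : μ (ball y (2 ^ n * s)) ≤ C ^ n * μ (ball y s) := by
  induction n with
  | zero => simp
  | succ n ih =>
    calc μ (ball y (2 ^ (n + 1) * s)) = μ (ball y (2 * (2 ^ n * s))) := by ring_nf
      _ ≤ C * μ (ball y (2 ^ n * s)) := hC y _ (by positivity)
      _ ≤ C * (C ^ n * μ (ball y s)) := by gcongr
      _ = C ^ (n + 1) * μ (ball y s) := by ring

theorem Doubling.exists_le_vol {μ : Measure X} (hd : Doubling μ) {z : X} {a : ℝ}
    (ha : 0 < a) (hza : μ (ball z a) ≠ 0) (r : ℝ) :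
    ∃ δ : ℝ≥0∞, δ ≠ 0 ∧ ∀ y ∈ ball z r, ∀ t, a ≤ t → δ ≤ vol μ y t := by
  obtain ⟨C, -, hC_fin, hC⟩ := hd
  obtain ⟨n, hn⟩ := pow_unbounded_of_one_lt ((r + a) / a) one_lt_two
  rw [div_lt_iff₀ ha] at hn
  refine ⟨μ (ball z a) / C ^ n, ENNReal.div_ne_zero.2 ⟨hza, by finiteness⟩, fun y hy t ht => ?_⟩
  refine ENNReal.div_le_of_le_mul' ?_
  calc μ (ball z a) ≤ μ (ball y (2 ^ n * a)) := by
        refine measure_mono (ball_subset_ball' ?_)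
        rw [mem_ball, dist_comm] at hy
        linarith
    _ ≤ C ^ n * μ (ball y a) := measure_ball_two_pow_mul_le hC y ha n
    _ ≤ C ^ n * vol μ y t := by gcongr; exact measure_mono (ball_subset_ball ht)

theorem lintegral_div_vol_le (μ : Measure X) (ν : Measure (X × ℝ))
    {g : X × ℝ → ℝ≥0∞} {s : Set (X × ℝ)} {δ : ℝ≥0∞} (hδ : δ ≠ 0) (hvol : ∀ p ∈ s, δ ≤ vol μ p.1 p.2)
    (hg : ∀ᵐ p ∂ν, p ∉ s → g p = 0) :
    ∫⁻ p, g p / vol μ p.1 p.2 ∂ν ≤ δ⁻¹ * ∫⁻ p, g p ∂ν := by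
  rw [← lintegral_const_mul' _ _ (ENNReal.inv_ne_top.2 hδ)]
  refine lintegral_mono_ae (hg.mono fun p hp => ?_)
  by_cases hps : p ∈ s
  · rw [mul_comm, ← div_eq_mul_inv]
    exact ENNReal.div_le_div_left (hvol p hps) _
  · simp [hp hps]

theorem stmt12_general {X : Type*} [MetricSpace X] [MeasurableSpace X] [BorelSpace X]
    (μ : Measure X) (hμ : Nondeg μ) (hd : Doubling μ) (q : ℝ) (hq : 1 ≤ q)
    (z : X) (r a b : ℝ) (ha : 0 < a) :
    ∃ C : ℝ≥0∞, C < ∞ ∧ ∀ f : X × ℝ → ℂ, Measurable f →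
      (∫⁻ w, (‖f w‖₊ : ℝ≥0∞) ^ q ∂muPlus μ) < ∞ →
      (∀ᵐ w ∂muPlus μ, w ∉ ball z r ×ˢ Ioo a b → f w = 0) →
      Continuous (Aq μ q f) ∧
        ∀ x, Aq μ q f x ≤ C * (∫⁻ w, (‖f w‖₊ : ℝ≥0∞) ^ q ∂muPlus μ) ^ (1/q) := by
  obtain ⟨δ, hδ, hvol⟩ := hd.exists_le_vol ha (hμ z a ha).1.ne' r
  have hq' : (0 : ℝ) ≤ 1 / q := by positivity
  refine ⟨δ⁻¹ ^ (1 / q), ENNReal.rpow_lt_top_of_nonneg hq' (ENNReal.inv_ne_top.2 hδ),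
    fun f _ hfin hsupp => ?_⟩
  set ν := (muPlus μ).withDensity fun p => (‖f p‖₊ : ℝ≥0∞) ^ q / vol μ p.1 p.2
  have hAq : Aq μ q f = fun x => ν (cone x) ^ (1 / q) := by
    ext x; rw [Aq, withDensity_apply _ (measurableSet_cone x)]
  have hν : ν univ ≤ δ⁻¹ * ∫⁻ w, (‖f w‖₊ : ℝ≥0∞) ^ q ∂muPlus μ := by
    rw [withDensity_apply _ MeasurableSet.univ, Measure.restrict_univ]
    refine lintegral_div_vol_le μ _ hδ
      (fun p (hp : p ∈ ball z r ×ˢ Ioo a b) => hvol p.1 hp.1 p.2 hp.2.1.le) ?_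
    filter_upwards [hsupp] with p hp hps
    simp [hp hps, ENNReal.zero_rpow_of_pos (by linarith : (0 : ℝ) < q)]
  refine ⟨?_, fun x => ?_⟩
  · rw [hAq]
    refine ENNReal.continuous_rpow_const.comp (continuous_measure_cone ν ?_ fun x => ?_)
    · exact (hν.trans_lt (ENNReal.mul_lt_top (by finiteness) hfin)).ne
    · exact withDensity_absolutelyContinuous _ _ (muPlus_graph_dist_eq_zero μ x)
  · calc Aq μ q f x = ν (cone x) ^ (1 / q) := by rw [hAq]
      _ ≤ (δ⁻¹ * ∫⁻ w, (‖f w‖₊ : ℝ≥0∞) ^ q ∂muPlus μ) ^ (1 / q) :=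
        ENNReal.rpow_le_rpow ((measure_mono (subset_univ _)).trans hν) hq'
      _ = _ := ENNReal.mul_rpow_of_nonneg _ _ hq'

/-- If `X` is doubling, `q ∈ [1,∞)` and `f ∈ L^q_c(X⁺)` (supported in a
fixed cylinder), then `𝒜^q f` is continuous, and `𝒜^q f(x) ≤ C ‖f‖_{L^q(X⁺)}` with `C`
depending only on `X` and the cylinder. -/
theorem stmt12 {X : Type*} [MetricSpace X] [MeasurableSpace X] [BorelSpace X] [Nonempty X]
    (μ : Measure X) (hμ : Nondeg μ) (hd : Doubling μ) (q : ℝ) (hq : 1 ≤ q)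
    (z : X) (r a b : ℝ) (hr : 0 < r) (ha : 0 < a) (hab : a < b) :
    ∃ C : ℝ≥0∞, C < ∞ ∧ ∀ f : X × ℝ → ℂ, Measurable f →
      (∫⁻ w, (‖f w‖₊ : ℝ≥0∞) ^ q ∂muPlus μ) < ∞ →
      (∀ᵐ w ∂muPlus μ, w ∉ ball z r ×ˢ Ioo a b → f w = 0) →
      Continuous (Aq μ q f) ∧
        ∀ x, Aq μ q f x ≤ C * (∫⁻ w, (‖f w‖₊ : ℝ≥0∞) ^ q ∂muPlus μ) ^ (1/q) :=
  stmt12_general μ hμ hd q hq z r a b ha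

end WTS
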